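/- arXiv:2306.09221 — 3 statements merged into one kernel-verified Lean document; each statement's English description precedes it below -/
import Mathlib

section
/- Let x be a quasispecies solution for the sharp peak fitness function on E = 𝒜^ℓ with mean fitness λ, and for 0 ≤ k ≤ ℓ let 𝒬(k) = Σ_{u : d(u,w*) = k} x(u). Then 𝒬(k) is given by the finite algebraic formula 𝒬(k) = (λ−1) · C(ℓ,k) · ((κ−1)^k / κ^ℓ) · Σ_{i=0}^{k} Σ_{j=0}^{ℓ−k} C(k,i) C(ℓ−k,j) · (−1)^i (κ−1)^j ρ^{i+j} / (λ − ρ^{i+j}). -/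
/-!
The mutation matrix is the `ℓ`-fold tensor power of the one-letter kernel `c + ρ δ` with
`c = q/(κ-1)`, and the centred indicator `g = κ δ_{w*ᵢ} - 1` sums to zero, so the products
`χ_S(u) = ∏_{i ∈ S} g(u_i)` are eigenvectors of `M` with eigenvalue `ρ^|S|`. Pairing the
quasispecies equation with `χ_S`, and using that the fitness differs from `1` only at `w*`, where
`χ_S = (κ-1)^|S|`, gives `⟨x, χ_S⟩ = (λ-1) (κ-1)^|S| ρ^|S| / (λ - ρ^|S|)`. The denominators do not
vanish: positivity of `M` forces `x(w*) > 0`, hence `λ > 1 ≥ ρ^|S|`.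

On the other side, `κ^ℓ 1[d(u,w*) = k] = ∑_{|D| = k} ∏_{i ∈ D} (κ-1-g(u_i)) ∏_{i ∉ D} (1+g(u_i))`.
Expanding the products into the `χ_{T ∪ U}` with `T ⊆ D`, `U ⊆ Dᶜ` and grouping the terms by
`|T|` and `|U|` turns the mass of the Hamming class into the stated double binomial sum.
-/

open Finset

theorem sum_powerset_sum_powerset_card {β R : Type*} [CommSemiring R] (s t : Finset β)
    (G : ℕ → ℕ → R) :
    ∑ T ∈ s.powerset, ∑ U ∈ t.powerset, G T.card U.card =
      ∑ i ∈ range (s.card + 1), ∑ j ∈ range (t.card + 1),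
        (s.card.choose i : R) * (t.card.choose j : R) * G i j := by
  rw [sum_congr rfl fun T _ => sum_powerset_apply_card (G T.card) (x := t),
    sum_powerset_apply_card fun i => ∑ j ∈ range (t.card + 1), t.card.choose j • G i j]
  simp only [nsmul_eq_mul, mul_sum, mul_assoc]

theorem ite_hammingDist_eq_sum_powersetCard {ι A R : Type*} [Fintype ι] [DecidableEq ι]
    [DecidableEq A] [CommSemiring R] (u w : ι → A) (k : ℕ) :
    (if hammingDist u w = k then 1 else 0 : R) =
      ∑ D ∈ powersetCard k univ,
        (∏ i ∈ D, if u i ≠ w i then 1 else 0) * ∏ i ∈ Dᶜ, if u i = w i then 1 else 0 := by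
  have summand (D : Finset ι) :
      (∏ i ∈ D, if u i ≠ w i then (1 : R) else 0) * (∏ i ∈ Dᶜ, if u i = w i then 1 else 0) =
        if D = univ.filter fun i => u i ≠ w i then 1 else 0 := by
    rw [prod_boole, prod_boole, ite_zero_mul_ite_zero, one_mul]
    congr 1
    apply propext
    simp only [Finset.ext_iff, mem_filter, mem_univ, true_and, mem_compl]
    constructor
    · rintro ⟨hD, hDc⟩ i
      exact ⟨hD i, fun hi => by_contra fun hiD => hi (hDc i hiD)⟩
    · intro h
      exact ⟨fun i => (h i).1, fun i hiD => by_contra fun hi => hiD ((h i).2 hi)⟩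
  simp only [summand, sum_ite_eq', mem_powersetCard_univ, hammingDist]

section Kernel

variable {A ι : Type*} [DecidableEq A] [Fintype ι]

def siteKernel (c ρ : ℝ) (a b : A) : ℝ := if a = b then c + ρ else c

theorem sum_siteKernel_mul [Fintype A] (c ρ : ℝ) (a : A) (h : A → ℝ) :
    ∑ b, siteKernel c ρ a b * h b = c * ∑ b, h b + ρ * h a := by
  have split (b : A) : siteKernel c ρ a b * h b = c * h b + if a = b then ρ * h b else 0 := by
    unfold siteKernel; split_ifs <;> ring
  simp only [split, sum_add_distrib, mul_sum, sum_ite_eq, mem_univ, if_true]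

def hammingKernel (c ρ : ℝ) (v u : ι → A) : ℝ := ∏ i, siteKernel c ρ (v i) (u i)

theorem hammingKernel_eq (c ρ : ℝ) (v u : ι → A) :
    hammingKernel c ρ v u =
      c ^ hammingDist v u * (c + ρ) ^ (Fintype.card ι - hammingDist v u) := by
  have hcard := card_filter_add_card_filter_not (s := univ) (fun i => v i ≠ u i)
  rw [card_univ] at hcard
  simp only [not_not] at hcard
  rw [hammingKernel, mul_comm]
  simp only [siteKernel, prod_ite, prod_const]
  congr 2
  rw [hammingDist]
  omega

theorem hammingKernel_pos {c ρ : ℝ} (hc : 0 < c) (hρ : 0 ≤ ρ) (v u : ι → A) :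
    0 < hammingKernel c ρ v u := by
  rw [hammingKernel_eq]
  exact mul_pos (pow_pos hc _) (pow_pos (by linarith) _)

end Kernel

theorem one_sub_mul_div_sub_one_mem_Ioo {κ q : ℝ} (hκ : 1 < κ) (hq0 : 0 < q)
    (hq1 : q < (κ - 1) / κ) : 1 - κ * q / (κ - 1) ∈ Set.Ioo 0 1 := by
  constructor
  · rw [sub_pos, div_lt_one (by linarith)]
    rwa [lt_div_iff₀ (by linarith), mul_comm] at hq1
  · linarith [div_pos (mul_pos (by linarith : 0 < κ) hq0) (by linarith : 0 < κ - 1)]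

section Character

variable {A ι : Type*} [Fintype A] [DecidableEq A]

local notation "κ" => (Fintype.card A : ℝ)

def siteCharacter (a₀ a : A) : ℝ := κ * (if a = a₀ then 1 else 0) - 1

theorem sum_siteCharacter (a₀ : A) : ∑ a, siteCharacter a₀ a = 0 := by
  simp [siteCharacter, sum_sub_distrib]

theorem one_add_siteCharacter (a₀ a : A) :
    1 + siteCharacter a₀ a = κ * if a = a₀ then 1 else 0 := by
  rw [siteCharacter]; ring

theorem sub_siteCharacter (a₀ a : A) :
    κ - 1 - siteCharacter a₀ a = κ * if a ≠ a₀ then 1 else 0 := by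
  by_cases h : a = a₀ <;> simp [siteCharacter, h]

theorem siteCharacter_self (a₀ : A) : siteCharacter a₀ a₀ = κ - 1 := by
  simp [siteCharacter]

def hammingCharacter (w : ι → A) (S : Finset ι) (u : ι → A) : ℝ :=
  ∏ i ∈ S, siteCharacter (w i) (u i)

theorem hammingCharacter_self (w : ι → A) (S : Finset ι) :
    hammingCharacter w S w = (κ - 1) ^ S.card := by
  simp only [hammingCharacter, siteCharacter_self, prod_const]

variable [Fintype ι]

theorem hammingKernel_mutation_eq (hA : 1 < Fintype.card A) (q ρ : ℝ)
    (hρ : ρ = 1 - κ * q / (κ - 1)) (v u : ι → A) :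
    hammingKernel (q / (κ - 1)) ρ v u =
      (q / (κ - 1)) ^ hammingDist v u * (1 - q) ^ (Fintype.card ι - hammingDist v u) := by
  have hκ : κ - 1 ≠ 0 := sub_ne_zero.2 (by exact_mod_cast hA.ne')
  rw [hammingKernel_eq, hρ]
  congr 2
  field_simp
  ring

variable [DecidableEq ι]

theorem sum_hammingKernel_mul_hammingCharacter (c ρ : ℝ) (hcρ : κ * c + ρ = 1)
    (w : ι → A) (S : Finset ι) (v : ι → A) :
    ∑ u, hammingKernel c ρ v u * hammingCharacter w S u = ρ ^ S.card * hammingCharacter w S v := by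
  have factor (i : ι) :
      ∑ b, siteKernel c ρ (v i) b * (if i ∈ S then siteCharacter (w i) b else 1) =
        if i ∈ S then ρ * siteCharacter (w i) (v i) else 1 := by
    by_cases hi : i ∈ S
    · simp [hi, sum_siteKernel_mul, sum_siteCharacter]
    · have total := sum_siteKernel_mul c ρ (v i) fun _ => 1
      simp only [hi, if_false, mul_one, sum_const, card_univ, nsmul_eq_mul] at total ⊢
      linarith
  calc ∑ u, hammingKernel c ρ v u * hammingCharacter w S u
      = ∑ u : ι → A, ∏ i, siteKernel c ρ (v i) (u i) *
          (if i ∈ S then siteCharacter (w i) (u i) else 1) := by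
        refine sum_congr rfl fun u _ => ?_
        rw [prod_mul_distrib, prod_ite_mem, univ_inter, hammingKernel, hammingCharacter]
    _ = ∏ i, ∑ b, siteKernel c ρ (v i) b * (if i ∈ S then siteCharacter (w i) b else 1) :=
        (Fintype.prod_sum fun i b =>
          siteKernel c ρ (v i) b * (if i ∈ S then siteCharacter (w i) b else 1)).symm
    _ = ρ ^ S.card * hammingCharacter w S v := by
        simp only [factor, prod_ite_mem, univ_inter, prod_mul_distrib, prod_const,
          hammingCharacter]

theorem prod_sub_siteCharacter_mul_prod_one_add (w u : ι → A) (D : Finset ι) :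
    (∏ i ∈ D, (κ - 1 - siteCharacter (w i) (u i))) * ∏ i ∈ Dᶜ, (1 + siteCharacter (w i) (u i)) =
      ∑ T ∈ D.powerset, ∑ U ∈ Dᶜ.powerset,
        (-1) ^ T.card * (κ - 1) ^ (D \ T).card * hammingCharacter w (T ∪ U) u := by
  rw [prod_sub, prod_one_add, sum_mul_sum]
  refine sum_congr rfl fun T hT => sum_congr rfl fun U hU => ?_
  have hTU : Disjoint T U :=
    disjoint_of_subset_left (mem_powerset.1 hT)
      (disjoint_of_subset_right (mem_powerset.1 hU) disjoint_compl_right)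
  rw [hammingCharacter, prod_union hTU, prod_const]
  ring

theorem sum_mul_prod_sub_siteCharacter_mul_prod_one_add (x : (ι → A) → ℝ) (w : ι → A) (a : ℝ)
    (F : ℕ → ℝ)
    (hmom : ∀ S, ∑ u, x u * hammingCharacter w S u = a * (κ - 1) ^ S.card * F S.card)
    (D : Finset ι) :
    ∑ u, x u * ((∏ i ∈ D, (κ - 1 - siteCharacter (w i) (u i))) *
        ∏ i ∈ Dᶜ, (1 + siteCharacter (w i) (u i))) =
      a * (κ - 1) ^ D.card * ∑ i ∈ range (D.card + 1), ∑ j ∈ range (Dᶜ.card + 1),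
        (D.card.choose i : ℝ) * (Dᶜ.card.choose j : ℝ) * ((-1) ^ i * (κ - 1) ^ j * F (i + j)) := by
  calc ∑ u, x u * ((∏ i ∈ D, (κ - 1 - siteCharacter (w i) (u i))) *
        ∏ i ∈ Dᶜ, (1 + siteCharacter (w i) (u i)))
      = ∑ T ∈ D.powerset, ∑ U ∈ Dᶜ.powerset, (-1) ^ T.card * (κ - 1) ^ (D \ T).card *
          ∑ u, x u * hammingCharacter w (T ∪ U) u := by
        simp only [prod_sub_siteCharacter_mul_prod_one_add, mul_sum]
        rw [sum_comm]
        refine sum_congr rfl fun T _ => ?_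
        rw [sum_comm]
        exact sum_congr rfl fun U _ => sum_congr rfl fun u _ => by ring
    _ = ∑ T ∈ D.powerset, ∑ U ∈ Dᶜ.powerset,
          a * (κ - 1) ^ D.card * ((-1) ^ T.card * (κ - 1) ^ U.card * F (T.card + U.card)) := by
        refine sum_congr rfl fun T hT => sum_congr rfl fun U hU => ?_
        have hTD := mem_powerset.1 hT
        have hTU : Disjoint T U :=
          disjoint_of_subset_left hTD
            (disjoint_of_subset_right (mem_powerset.1 hU) disjoint_compl_right)
        rw [hmom, card_union_of_disjoint hTU, ← card_sdiff_add_card_eq_card hTD]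
        ring
    _ = _ := by
        simp only [← mul_sum]
        rw [sum_powerset_sum_powerset_card D Dᶜ fun i j => (-1) ^ i * (κ - 1) ^ j * F (i + j)]

theorem sum_filter_hammingDist_eq [Nonempty A] (x : (ι → A) → ℝ) (w : ι → A) (a : ℝ)
    (F : ℕ → ℝ)
    (hmom : ∀ S, ∑ u, x u * hammingCharacter w S u = a * (κ - 1) ^ S.card * F S.card) (k : ℕ) :
    ∑ u ∈ univ.filter (fun u => hammingDist u w = k), x u =
      a * ((Fintype.card ι).choose k : ℝ) * ((κ - 1) ^ k / κ ^ Fintype.card ι) *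
        ∑ i ∈ range (k + 1), ∑ j ∈ range (Fintype.card ι - k + 1),
          (k.choose i : ℝ) * ((Fintype.card ι - k).choose j : ℝ) *
            ((-1) ^ i * (κ - 1) ^ j * F (i + j)) := by
  have pointwise (u : ι → A) :
      κ ^ Fintype.card ι * (if hammingDist u w = k then 1 else 0) =
        ∑ D ∈ powersetCard k univ, (∏ i ∈ D, (κ - 1 - siteCharacter (w i) (u i))) *
          ∏ i ∈ Dᶜ, (1 + siteCharacter (w i) (u i)) := by
    rw [ite_hammingDist_eq_sum_powersetCard, mul_sum]
    refine sum_congr rfl fun D _ => ?_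
    simp only [sub_siteCharacter, one_add_siteCharacter, prod_mul_distrib, prod_const,
      ← card_add_card_compl D, pow_add]
    ring
  have hκ : κ ≠ 0 := by positivity
  rw [← mul_right_inj' (pow_ne_zero (Fintype.card ι) hκ), sum_filter]
  calc κ ^ Fintype.card ι * ∑ u, (if hammingDist u w = k then x u else 0)
      = ∑ u, x u * (κ ^ Fintype.card ι * if hammingDist u w = k then 1 else 0) := by
        rw [mul_sum]
        exact sum_congr rfl fun u _ => by split_ifs <;> ring
    _ = ∑ D ∈ powersetCard k univ, ∑ u, x u * ((∏ i ∈ D, (κ - 1 - siteCharacter (w i) (u i))) *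
          ∏ i ∈ Dᶜ, (1 + siteCharacter (w i) (u i))) := by
        simp only [pointwise, mul_sum]
        exact sum_comm
    _ = ∑ D ∈ powersetCard k univ, a * (κ - 1) ^ k *
          ∑ i ∈ range (k + 1), ∑ j ∈ range (Fintype.card ι - k + 1),
            (k.choose i : ℝ) * ((Fintype.card ι - k).choose j : ℝ) *
              ((-1) ^ i * (κ - 1) ^ j * F (i + j)) := by
        refine sum_congr rfl fun D hD => ?_
        have hDk := mem_powersetCard_univ.1 hD
        rw [sum_mul_prod_sub_siteCharacter_mul_prod_one_add x w a F hmom, card_compl, hDk]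
    _ = _ := by
        rw [sum_const, card_powersetCard, card_univ, nsmul_eq_mul]
        field_simp

end Character

section Quasispecies

variable {E : Type*} [Fintype E]

theorem quasispecies_pos (M : Matrix E E ℝ) (hM : ∀ u v, 0 < M u v) (f x : E → ℝ)
    (hf : ∀ v, 0 < f v) (hx0 : ∀ u, 0 ≤ x u) (hx1 : ∑ u, x u = 1)
    (hqs : ∀ u, x u * (∑ v, x v * f v) = ∑ v, x v * f v * M v u) (u : E) : 0 < x u := by
  obtain ⟨v, hv⟩ : ∃ v, 0 < x v := by
    by_contra! h
    linarith [sum_nonpos fun v (_ : v ∈ univ) => h v]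
  have pairing_pos (g : E → ℝ) (hg : ∀ v, 0 < g v) : 0 < ∑ v, x v * g v :=
    sum_pos' (fun v _ => mul_nonneg (hx0 v) (hg v).le) ⟨v, mem_univ v, mul_pos hv (hg v)⟩
  have hrhs : 0 < ∑ v, x v * f v * M v u := by
    simpa only [mul_assoc] using pairing_pos _ fun v => mul_pos (hf v) (hM v u)
  rw [← hqs] at hrhs
  exact pos_of_mul_pos_left hrhs (pairing_pos f hf).le

theorem mul_sum_mul_eq_of_eigenvector (M : Matrix E E ℝ) (f x χ : E → ℝ) (lam μ : ℝ)
    (hqs : ∀ u, x u * lam = ∑ v, x v * f v * M v u)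
    (heig : ∀ v, ∑ u, M v u * χ u = μ * χ v) :
    lam * ∑ u, x u * χ u = μ * ∑ v, x v * f v * χ v := by
  calc lam * ∑ u, x u * χ u = ∑ u, (∑ v, x v * f v * M v u) * χ u := by
        rw [mul_sum]
        exact sum_congr rfl fun u _ => by rw [← hqs]; ring
    _ = ∑ v, x v * f v * ∑ u, M v u * χ u := by
        simp only [sum_mul, mul_sum]
        rw [sum_comm]
        exact sum_congr rfl fun v _ => sum_congr rfl fun u _ => by ring
    _ = μ * ∑ v, x v * f v * χ v := by
        simp only [heig, mul_sum]
        exact sum_congr rfl fun v _ => by ring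

variable [DecidableEq E]

theorem sum_mul_sharpPeak_mul (f x χ : E → ℝ) (w : E) (σ : ℝ)
    (hf : ∀ u, f u = if u = w then σ else 1) :
    ∑ v, x v * f v * χ v = ∑ v, x v * χ v + (σ - 1) * x w * χ w := by
  have split (v : E) :
      x v * f v * χ v = x v * χ v + if v = w then (σ - 1) * x v * χ v else 0 := by
    rw [hf]; split_ifs <;> ring
  simp only [split, sum_add_distrib, sum_ite_eq', mem_univ, if_true]

theorem sum_mul_sharpPeak (f x : E → ℝ) (w : E) (σ : ℝ)
    (hf : ∀ u, f u = if u = w then σ else 1) (hx1 : ∑ u, x u = 1) :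
    ∑ v, x v * f v = 1 + (σ - 1) * x w := by
  simpa [hx1] using sum_mul_sharpPeak_mul f x 1 w σ hf

theorem sum_mul_eigenvector_sharpPeak (M : Matrix E E ℝ) (f x χ : E → ℝ) (w : E)
    (σ lam μ : ℝ) (hf : ∀ u, f u = if u = w then σ else 1) (hx1 : ∑ u, x u = 1)
    (hlam : lam = ∑ v, x v * f v) (hqs : ∀ u, x u * lam = ∑ v, x v * f v * M v u)
    (heig : ∀ v, ∑ u, M v u * χ u = μ * χ v) (hμ : lam ≠ μ) :
    ∑ u, x u * χ u = (lam - 1) * χ w * (μ / (lam - μ)) := by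
  have moment := mul_sum_mul_eq_of_eigenvector M f x χ lam μ hqs heig
  rw [sum_mul_sharpPeak_mul f x χ w σ hf] at moment
  rw [sum_mul_sharpPeak f x w σ hf hx1] at hlam
  have hμ' : lam - μ ≠ 0 := sub_ne_zero.2 hμ
  field_simp
  linear_combination moment - μ * χ w * hlam

end Quasispecies

theorem quasispecies_hamming_class_algebraic_general
    (A : Type*) [Fintype A] [DecidableEq A] (κ ℓ : ℕ)
    (hκ : Fintype.card A = κ) (hκ2 : 2 ≤ κ)
    (q : ℝ) (hq0 : 0 < q) (hq1 : q < ((κ : ℝ) - 1) / κ)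
    (ρ : ℝ) (hρ : ρ = 1 - κ * q / ((κ : ℝ) - 1))
    (σ : ℝ) (hσ : 1 < σ) (wstar : Fin ℓ → A)
    (f : (Fin ℓ → A) → ℝ) (hf : ∀ u, f u = if u = wstar then σ else 1)
    (M : Matrix (Fin ℓ → A) (Fin ℓ → A) ℝ)
    (hM : ∀ u v, M u v =
      (q / ((κ : ℝ) - 1)) ^ hammingDist u v * (1 - q) ^ (ℓ - hammingDist u v))
    (x : (Fin ℓ → A) → ℝ) (hx0 : ∀ u, 0 ≤ x u) (hx1 : ∑ u, x u = 1)
    (hqs : ∀ u, x u * (∑ v, x v * f v) = ∑ v, x v * f v * M v u)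
    (lam : ℝ) (hlam : lam = ∑ v, x v * f v)
    (k : ℕ) :
    (∑ u ∈ Finset.univ.filter (fun u => hammingDist u wstar = k), x u) =
      (lam - 1) * (Nat.choose ℓ k : ℝ) * (((κ : ℝ) - 1) ^ k / (κ : ℝ) ^ ℓ) *
        ∑ i ∈ Finset.range (k + 1), ∑ j ∈ Finset.range (ℓ - k + 1),
          (Nat.choose k i : ℝ) * (Nat.choose (ℓ - k) j : ℝ) *
            ((-1 : ℝ) ^ i * ((κ : ℝ) - 1) ^ j * ρ ^ (i + j) / (lam - ρ ^ (i + j))) := by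
  subst hκ
  have hκ1 : (1 : ℝ) < Fintype.card A := by exact_mod_cast hκ2
  obtain ⟨hρ0, hρ1⟩ : ρ ∈ Set.Ioo 0 1 := hρ ▸ one_sub_mul_div_sub_one_mem_Ioo hκ1 hq0 hq1
  have hMK (v u : Fin ℓ → A) : M v u = hammingKernel (q / (Fintype.card A - 1)) ρ v u := by
    simpa only [hammingKernel_mutation_eq hκ2 q ρ hρ, Fintype.card_fin] using hM v u
  have hMpos (v u : Fin ℓ → A) : 0 < M v u :=
    hMK v u ▸ hammingKernel_pos (div_pos hq0 (by linarith)) hρ0.le v u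
  have hfpos (v : Fin ℓ → A) : 0 < f v := by rw [hf]; split_ifs <;> linarith
  have hxw := quasispecies_pos M hMpos f x hfpos hx0 hx1 hqs wstar
  rw [← hlam] at hqs
  have hlam1 : 1 < lam := by
    rw [hlam, sum_mul_sharpPeak f x wstar σ hf hx1]
    linarith [mul_pos (sub_pos.2 hσ) hxw]
  have hmom (S : Finset (Fin ℓ)) : ∑ u, x u * hammingCharacter wstar S u =
      (lam - 1) * ((Fintype.card A : ℝ) - 1) ^ S.card * (ρ ^ S.card / (lam - ρ ^ S.card)) := by
    rw [sum_mul_eigenvector_sharpPeak M f x _ wstar σ lam (ρ ^ S.card) hf hx1 hlam hqs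
      (fun v => by
        simp only [hMK, sum_hammingKernel_mul_hammingCharacter (q / (Fintype.card A - 1)) ρ
          (by rw [hρ]; ring)])
      (pow_le_one₀ hρ0.le hρ1.le |>.trans_lt hlam1).ne', hammingCharacter_self]
  have : Nonempty A := Fintype.card_pos_iff.1 (by omega)
  rw [sum_filter_hammingDist_eq x wstar (lam - 1) (fun s => ρ ^ s / (lam - ρ ^ s)) hmom k,
    Fintype.card_fin]
  simp only [mul_div_assoc]

/-- Exact finite algebraic formula for the quasispecies distribution on Hamming
classes: `𝒬(k) = (λ-1) C(ℓ,k) ((κ-1)^k/κ^ℓ) ∑_{i=0}^{k} ∑_{j=0}^{ℓ-k}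
C(k,i) C(ℓ-k,j) (-1)^i (κ-1)^j ρ^{i+j}/(λ-ρ^{i+j})`. -/
theorem quasispecies_hamming_class_algebraic
    (A : Type*) [Fintype A] [DecidableEq A] (κ ℓ : ℕ)
    (hκ : Fintype.card A = κ) (hκ2 : 2 ≤ κ) (hℓ : 1 ≤ ℓ)
    (q : ℝ) (hq0 : 0 < q) (hq1 : q < ((κ : ℝ) - 1) / κ)
    (ρ : ℝ) (hρ : ρ = 1 - κ * q / ((κ : ℝ) - 1))
    (σ : ℝ) (hσ : 1 < σ) (wstar : Fin ℓ → A)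
    (f : (Fin ℓ → A) → ℝ) (hf : ∀ u, f u = if u = wstar then σ else 1)
    (M : Matrix (Fin ℓ → A) (Fin ℓ → A) ℝ)
    (hM : ∀ u v, M u v =
      (q / ((κ : ℝ) - 1)) ^ hammingDist u v * (1 - q) ^ (ℓ - hammingDist u v))
    (x : (Fin ℓ → A) → ℝ) (hx0 : ∀ u, 0 ≤ x u) (hx1 : ∑ u, x u = 1)
    (hqs : ∀ u, x u * (∑ v, x v * f v) = ∑ v, x v * f v * M v u)
    (lam : ℝ) (hlam : lam = ∑ v, x v * f v)
    (k : ℕ) (hk : k ≤ ℓ) :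
    (∑ u ∈ Finset.univ.filter (fun u => hammingDist u wstar = k), x u) =
      (lam - 1) * (Nat.choose ℓ k : ℝ) * (((κ : ℝ) - 1) ^ k / (κ : ℝ) ^ ℓ) *
        ∑ i ∈ Finset.range (k + 1), ∑ j ∈ Finset.range (ℓ - k + 1),
          (Nat.choose k i : ℝ) * (Nat.choose (ℓ - k) j : ℝ) *
            ((-1 : ℝ) ^ i * ((κ : ℝ) - 1) ^ j * ρ ^ (i + j) / (lam - ρ ^ (i + j))) :=
  quasispecies_hamming_class_algebraic_general A κ ℓ hκ hκ2 q hq0 hq1 ρ hρ σ hσ wstar f hf M hM x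
    hx0 hx1 hqs lam hlam k
end

section
/- (Error threshold for finitely many peaks.) Fix an integer k ≥ 1 and values σ_1,…,σ_k > 1, and set σ = max_i σ_i. Let a ∈ [0, ln σ) ∪ (ln σ, ∞) with a < ∞, and let (ℓ_m), (q_m) be sequences with ℓ_m → ∞, q_m → 0, ℓ_m q_m → a. For each m, choose k distinct peaks w*_1,…,w*_k in 𝒜^{ℓ_m} and let λ_m be the mean fitness of a quasispecies solution for the fitness function f(w*_i) = σ_i (1 ≤ i ≤ k) and f(u) = 1 otherwise. Then: if a > ln σ, λ_m → 1; if a < ln σ, λ_m → σ e^{−a} > 1. -/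
open scoped BigOperators
open Filter Topology

/-!
Write `λ` for the mean fitness, `P = (1 - q)^ℓ` for the probability of an error-free copy and
`μ = max 1 (σ P)`. The quasispecies equation at the highest peak gives `σ P ≤ λ`, and `1 ≤ λ`
since `f ≥ 1`, so `μ ≤ λ`. At the peak `w_i` it gives `x(w_i) (λ - σ_i P) ≤ q λ`, because every
mutation between distinct sequences has probability at most `q`. Since `λ - 1` is carried by
the peaks, `(λ - μ)² ≤ (λ - μ)(λ - 1) ≤ Σ_i (σ_i - 1) x(w_i) (λ - σ_i P) = O(q)`. Hence
`λ → max 1 (σ e^{-a})`, which is `1` for `a > ln σ` and `σ e^{-a}` for `a < ln σ`.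
-/

theorem tendsto_one_sub_pow_exp {α : Type*} {l : Filter α} {ℓ : α → ℕ} {q : α → ℝ} {a : ℝ}
    (hq0 : ∀ m, q m ≠ 0) (hq : Tendsto q l (𝓝 0))
    (hlq : Tendsto (fun m => (ℓ m : ℝ) * q m) l (𝓝 a)) :
    Tendsto (fun m => (1 - q m) ^ ℓ m) l (𝓝 (Real.exp (-a))) := by
  have hderiv : HasDerivAt (fun t : ℝ => Real.log (1 - t)) (-1) 0 := by
    simpa using ((hasDerivAt_id (0 : ℝ)).const_sub 1).log (by norm_num)
  have hslope : Tendsto (fun m => slope (fun t : ℝ => Real.log (1 - t)) 0 (q m)) l (𝓝 (-1)) :=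
    (hasDerivAt_iff_tendsto_slope.mp hderiv).comp
      (tendsto_nhdsWithin_of_tendsto_nhds_of_eventually_within q hq (.of_forall hq0))
  have hlog : Tendsto (fun m => (ℓ m : ℝ) * Real.log (1 - q m)) l (𝓝 (-a)) := by
    refine (by simpa using hlq.mul hslope : Tendsto _ l (𝓝 (-a))).congr fun m => ?_
    simp only [slope_def_field, sub_zero, Real.log_one]
    field_simp [hq0 m]
  refine ((Real.continuous_exp.tendsto _).comp hlog).congr' ?_
  filter_upwards [hq.eventually (gt_mem_nhds one_pos)] with m hm
  rw [Function.comp_apply, ← Real.log_pow, Real.exp_log (pow_pos (by linarith) _)]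

theorem tendsto_of_sq_sub_le {α : Type*} {l : Filter α} {μ g ε : α → ℝ} {L : ℝ}
    (hμ : Tendsto μ l (𝓝 L)) (hε : Tendsto ε l (𝓝 0))
    (hle : ∀ᶠ m in l, μ m ≤ g m ∧ (g m - μ m) ^ 2 ≤ ε m) :
    Tendsto g l (𝓝 L) := by
  have hgap : Tendsto (fun m => g m - μ m) l (𝓝 0) := by
    refine tendsto_of_tendsto_of_tendsto_of_le_of_le' tendsto_const_nhds
      (by simpa using hε.sqrt) ?_ ?_ <;> filter_upwards [hle] with m ⟨h1, h2⟩
    · linarith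
    · exact Real.le_sqrt_of_sq_le h2
  simpa using hμ.add hgap

section Quasispecies

variable {E ι : Type*}

structure IsPeakLandscape (f : E → ℝ) (w : ι → E) (σi : ι → ℝ) : Prop where
  apply_peak : ∀ i, f (w i) = σi i
  apply_of_ne : ∀ u, (∀ i, u ≠ w i) → f u = 1

variable {f : E → ℝ} {w : ι → E} {σi : ι → ℝ}

theorem IsPeakLandscape.apply_mem {s : Set ℝ} (hf : IsPeakLandscape f w σi) (h1 : 1 ∈ s)
    (hσi : ∀ i, σi i ∈ s) (v : E) : f v ∈ s := by
  by_cases hv : ∃ i, v = w i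
  · obtain ⟨i, rfl⟩ := hv
    exact hf.apply_peak i ▸ hσi i
  · push Not at hv
    exact hf.apply_of_ne v hv ▸ h1

variable [Fintype E] {M : E → E → ℝ} {x : E → ℝ}

def meanFitness (f x : E → ℝ) : ℝ := ∑ v, x v * f v

structure IsQuasispecies (f : E → ℝ) (M : E → E → ℝ) (x : E → ℝ) : Prop where
  nonneg : ∀ u, 0 ≤ x u
  sum_eq_one : ∑ u, x u = 1
  mul_meanFitness : ∀ u, x u * meanFitness f x = ∑ v, x v * f v * M v u

theorem le_meanFitness {c : ℝ} (hx0 : ∀ u, 0 ≤ x u) (hx1 : ∑ u, x u = 1) (hf : ∀ v, c ≤ f v) :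
    c ≤ meanFitness f x :=
  calc c = ∑ v, x v * c := by rw [← Finset.sum_mul, hx1, one_mul]
    _ ≤ meanFitness f x := Finset.sum_le_sum fun v _ => mul_le_mul_of_nonneg_left (hf v) (hx0 v)

theorem meanFitness_le {c : ℝ} (hx0 : ∀ u, 0 ≤ x u) (hx1 : ∑ u, x u = 1) (hf : ∀ v, f v ≤ c) :
    meanFitness f x ≤ c :=
  calc meanFitness f x ≤ ∑ v, x v * c :=
        Finset.sum_le_sum fun v _ => mul_le_mul_of_nonneg_left (hf v) (hx0 v)
    _ = c := by rw [← Finset.sum_mul, hx1, one_mul]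

theorem IsPeakLandscape.meanFitness_sub_one_le [DecidableEq E] (hf : IsPeakLandscape f w σi)
    [Fintype ι] (hx0 : ∀ u, 0 ≤ x u) (hx1 : ∑ u, x u = 1) (hσi : ∀ i, 1 ≤ σi i) :
    meanFitness f x - 1 ≤ ∑ i, (σi i - 1) * x (w i) := by
  have hoff : ∀ v ∉ Finset.univ.image w, x v * (f v - 1) = 0 := fun v hv => by
    rw [hf.apply_of_ne v fun i hvi => hv (Finset.mem_image.mpr ⟨i, Finset.mem_univ i, hvi.symm⟩),
      sub_self, mul_zero]
  calc meanFitness f x - 1 = ∑ v, x v * (f v - 1) := by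
        simp only [meanFitness, mul_sub, mul_one, Finset.sum_sub_distrib, hx1]
    _ = ∑ v ∈ Finset.univ.image w, x v * (f v - 1) :=
        (Finset.sum_subset (Finset.subset_univ _) fun v _ hv => hoff v hv).symm
    _ ≤ ∑ i, x (w i) * (f (w i) - 1) := Finset.sum_image_le_of_nonneg fun v hv => by
        obtain ⟨i, -, rfl⟩ := Finset.mem_image.mp hv
        exact mul_nonneg (hx0 _) (by linarith [hf.apply_peak i, hσi i])
    _ = ∑ i, (σi i - 1) * x (w i) := by simp only [hf.apply_peak, mul_comm]

namespace IsQuasispecies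

theorem pos (hx : IsQuasispecies f M x) (hf : ∀ v, 0 < f v) (hM : ∀ v u, 0 < M v u) (u : E) :
    0 < x u := by
  obtain ⟨v, -, hv⟩ : ∃ v ∈ Finset.univ, (0 : ℝ) < x v :=
    Finset.exists_lt_of_sum_lt (by simp [hx.sum_eq_one])
  refine pos_of_mul_pos_left ?_ (le_meanFitness hx.nonneg hx.sum_eq_one fun v => (hf v).le)
  rw [hx.mul_meanFitness u]
  refine Finset.sum_pos' (fun v _ => ?_) ⟨v, Finset.mem_univ _, ?_⟩
  · exact mul_nonneg (mul_nonneg (hx.nonneg v) (hf v).le) (hM v u).le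
  · exact mul_pos (mul_pos hv (hf v)) (hM v u)

theorem mul_diag_le_meanFitness (hx : IsQuasispecies f M x) (hf : ∀ v, 0 < f v)
    (hM : ∀ v u, 0 < M v u) (u : E) : f u * M u u ≤ meanFitness f x := by
  refine le_of_mul_le_mul_left ?_ (hx.pos hf hM u)
  calc x u * (f u * M u u) = x u * f u * M u u := (mul_assoc _ _ _).symm
    _ ≤ ∑ v, x v * f v * M v u :=
        Finset.single_le_sum (f := fun v => x v * f v * M v u)
          (fun v _ => mul_nonneg (mul_nonneg (hx.nonneg v) (hf v).le) (hM v u).le)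
          (Finset.mem_univ u)
    _ = x u * meanFitness f x := (hx.mul_meanFitness u).symm

theorem mul_meanFitness_sub_diag_le (hx : IsQuasispecies f M x) (hf : ∀ v, 0 ≤ f v) {u : E}
    {q : ℝ} (hq : 0 ≤ q) (hoff : ∀ v, v ≠ u → M v u ≤ q) :
    x u * (meanFitness f x - f u * M u u) ≤ q * meanFitness f x := by
  classical
  have hterm : ∀ v, 0 ≤ x v * f v := fun v => mul_nonneg (hx.nonneg v) (hf v)
  have hmutants : ∑ v ∈ Finset.univ.erase u, x v * f v * M v u ≤ q * meanFitness f x :=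
    calc ∑ v ∈ Finset.univ.erase u, x v * f v * M v u
        ≤ ∑ v ∈ Finset.univ.erase u, x v * f v * q := Finset.sum_le_sum fun v hv =>
          mul_le_mul_of_nonneg_left (hoff v (Finset.ne_of_mem_erase hv)) (hterm v)
      _ ≤ ∑ v, x v * f v * q := Finset.sum_le_sum_of_subset_of_nonneg
          (Finset.erase_subset _ _) fun v _ _ => mul_nonneg (hterm v) hq
      _ = q * meanFitness f x := by rw [← Finset.sum_mul, mul_comm, meanFitness]
  have hsplit := Finset.add_sum_erase Finset.univ (fun v => x v * f v * M v u) (Finset.mem_univ u)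
  rw [← hx.mul_meanFitness u] at hsplit
  linarith

theorem max_le_meanFitness (hx : IsQuasispecies f M x) (hf : IsPeakLandscape f w σi)
    (hσi : ∀ i, 1 ≤ σi i) {σ P : ℝ} (hσmem : ∃ i, σi i = σ) (hM : ∀ v u, 0 < M v u)
    (hdiag : ∀ u, M u u = P) : max 1 (σ * P) ≤ meanFitness f x := by
  have hf1 : ∀ v, 1 ≤ f v := hf.apply_mem (s := Set.Ici 1) (Set.mem_Ici.2 le_rfl) hσi
  obtain ⟨i, rfl⟩ := hσmem
  refine max_le (le_meanFitness hx.nonneg hx.sum_eq_one hf1) ?_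
  simpa only [hf.apply_peak, hdiag] using
    hx.mul_diag_le_meanFitness (fun v => one_pos.trans_le (hf1 v)) hM (w i)

theorem sq_meanFitness_sub_max_le [Fintype ι] (hx : IsQuasispecies f M x)
    (hf : IsPeakLandscape f w σi) (hσi : ∀ i, 1 ≤ σi i) {σ P q : ℝ} (hσ : ∀ i, σi i ≤ σ)
    (hσmem : ∃ i, σi i = σ) (hM : ∀ v u, 0 < M v u) (hdiag : ∀ u, M u u = P) (hq : 0 ≤ q)
    (hoff : ∀ v u, v ≠ u → M v u ≤ q) :
    (meanFitness f x - max 1 (σ * P)) ^ 2 ≤ q * σ * ∑ i, (σi i - 1) := by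
  classical
  have hf1 : ∀ v, 1 ≤ f v := hf.apply_mem (s := Set.Ici 1) (Set.mem_Ici.2 le_rfl) hσi
  have hσ1 : 1 ≤ σ := hσmem.elim fun i hi => hi ▸ hσi i
  have hlam : meanFitness f x ≤ σ :=
    meanFitness_le hx.nonneg hx.sum_eq_one (hf.apply_mem (s := Set.Iic σ) hσ1 hσ)
  have hμ := hx.max_le_meanFitness hf hσi hσmem hM hdiag
  have hP : 0 ≤ P := hσmem.elim fun i _ => hdiag (w i) ▸ (hM _ _).le
  set D := meanFitness f x - max 1 (σ * P)
  have hD : 0 ≤ D := sub_nonneg.2 hμ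
  have hpeak : ∀ i, x (w i) * D ≤ q * σ := fun i =>
    calc x (w i) * D ≤ x (w i) * (meanFitness f x - f (w i) * M (w i) (w i)) := by
          refine mul_le_mul_of_nonneg_left ?_ (hx.nonneg _)
          rw [hf.apply_peak, hdiag]
          nlinarith [le_max_right 1 (σ * P), hσ i]
      _ ≤ q * meanFitness f x :=
          hx.mul_meanFitness_sub_diag_le (fun v => zero_le_one.trans (hf1 v)) hq
            fun v hv => hoff v (w i) hv
      _ ≤ q * σ := mul_le_mul_of_nonneg_left hlam hq
  calc D ^ 2 ≤ D * (meanFitness f x - 1) := by nlinarith [le_max_left 1 (σ * P)]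
    _ ≤ D * ∑ i, (σi i - 1) * x (w i) := mul_le_mul_of_nonneg_left
        (hf.meanFitness_sub_one_le hx.nonneg hx.sum_eq_one hσi) hD
    _ = ∑ i, (σi i - 1) * (x (w i) * D) := by
        rw [Finset.mul_sum]
        exact Finset.sum_congr rfl fun i _ => by ring
    _ ≤ ∑ i, (σi i - 1) * (q * σ) := Finset.sum_le_sum fun i _ =>
        mul_le_mul_of_nonneg_left (hpeak i) (sub_nonneg.2 (hσi i))
    _ = q * σ * ∑ i, (σi i - 1) := by rw [← Finset.sum_mul, mul_comm]

end IsQuasispecies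

end Quasispecies

section MutationMatrix

variable {A : Type*} [DecidableEq A] {ℓ κ : ℕ} {q : ℝ}

noncomputable def mutationMatrix (κ : ℕ) (q : ℝ) (v u : Fin ℓ → A) : ℝ :=
  (q / ((κ : ℝ) - 1)) ^ hammingDist v u * (1 - q) ^ (ℓ - hammingDist v u)

theorem mutationMatrix_self (u : Fin ℓ → A) : mutationMatrix κ q u u = (1 - q) ^ ℓ := by
  simp [mutationMatrix]

theorem mutationMatrix_pos (hκ : 1 < κ) (hq0 : 0 < q) (hq1 : q < 1) (v u : Fin ℓ → A) :
    0 < mutationMatrix κ q v u := by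
  have hκ' : (1 : ℝ) < κ := by exact_mod_cast hκ
  exact mul_pos (pow_pos (div_pos hq0 (by linarith)) _) (pow_pos (by linarith) _)

theorem mutationMatrix_le_of_ne (hκ : 1 < κ) (hq0 : 0 ≤ q) (hq1 : q ≤ 1) {v u : Fin ℓ → A}
    (h : v ≠ u) : mutationMatrix κ q v u ≤ q := by
  have hκ' : (1 : ℝ) ≤ κ - 1 := by
    have : (2 : ℝ) ≤ κ := by exact_mod_cast hκ
    linarith
  have hr : q / (κ - 1) ≤ q := div_le_self hq0 hκ'
  have hr0 : 0 ≤ q / (κ - 1) := div_nonneg hq0 (by linarith)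
  calc mutationMatrix κ q v u ≤ q / (κ - 1) * 1 :=
        mul_le_mul (pow_le_of_le_one hr0 (hr.trans hq1) (hammingDist_ne_zero.2 h))
          (pow_le_one₀ (by linarith) (by linarith)) (by positivity) hr0
    _ ≤ q := by rwa [mul_one]

end MutationMatrix

theorem error_threshold_finitely_many_peaks_general
    (A : Type*) [Fintype A] [DecidableEq A] (κ : ℕ)
    (hκ2 : 2 ≤ κ)
    (k : ℕ)
    (σi : Fin k → ℝ) (hσi : ∀ i, 1 < σi i)
    (σ : ℝ) (hσub : ∀ i, σi i ≤ σ) (hσmem : ∃ i, σi i = σ)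
    (a : ℝ)
    (ℓ : ℕ → ℕ) (q : ℕ → ℝ)
    (hq0 : ∀ m, 0 < q m)
    (hq : Tendsto q atTop (𝓝 0))
    (hlq : Tendsto (fun m => (ℓ m : ℝ) * q m) atTop (𝓝 a))
    (w : ∀ m, Fin k → (Fin (ℓ m) → A))
    (f : ∀ m, (Fin (ℓ m) → A) → ℝ)
    (hfpeak : ∀ m i, f m (w m i) = σi i)
    (hfother : ∀ m u, (∀ i, u ≠ w m i) → f m u = 1)
    (x : ∀ m, (Fin (ℓ m) → A) → ℝ)
    (hx0 : ∀ m u, 0 ≤ x m u) (hx1 : ∀ m, ∑ u, x m u = 1)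
    (hqs : ∀ m u, x m u * (∑ v, x m v * f m v) =
      ∑ v, x m v * f m v *
        ((q m / ((κ : ℝ) - 1)) ^ hammingDist v u *
          (1 - q m) ^ (ℓ m - hammingDist v u))) :
    (Real.log σ < a →
      Tendsto (fun m => ∑ v, x m v * f m v) atTop (𝓝 1)) ∧
    (a < Real.log σ →
      1 < σ * Real.exp (-a) ∧
        Tendsto (fun m => ∑ v, x m v * f m v) atTop (𝓝 (σ * Real.exp (-a)))) := by
  have hσ : 0 < σ := hσmem.elim fun i hi => hi ▸ one_pos.trans (hσi i)
  have hlim : Tendsto (fun m => ∑ v, x m v * f m v) atTop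
      (𝓝 (max 1 (σ * Real.exp (-a)))) := by
    refine tendsto_of_sq_sub_le (tendsto_const_nhds.max
      ((tendsto_one_sub_pow_exp (fun m => (hq0 m).ne') hq hlq).const_mul σ))
      (ε := fun m => q m * σ * ∑ i, (σi i - 1))
      (by simpa using (hq.mul_const σ).mul_const _) ?_
    filter_upwards [hq.eventually (gt_mem_nhds one_pos)] with m hqm
    have hx : IsQuasispecies (f m) (mutationMatrix κ (q m)) (x m) := ⟨hx0 m, hx1 m, hqs m⟩
    have hM : ∀ v u : Fin (ℓ m) → A, 0 < mutationMatrix κ (q m) v u :=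
      mutationMatrix_pos hκ2 (hq0 m) hqm
    exact ⟨hx.max_le_meanFitness ⟨hfpeak m, hfother m⟩ (fun i => (hσi i).le) hσmem hM
        fun u => mutationMatrix_self u,
      hx.sq_meanFitness_sub_max_le ⟨hfpeak m, hfother m⟩ (fun i => (hσi i).le) hσub hσmem hM
        (fun u => mutationMatrix_self u) (hq0 m).le
        fun v u h => mutationMatrix_le_of_ne hκ2 (hq0 m).le hqm.le h⟩
  have hexp : σ * Real.exp (-a) = Real.exp (Real.log σ - a) := by
    rw [Real.exp_sub, Real.exp_log hσ, Real.exp_neg, div_eq_mul_inv]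
  refine ⟨fun h => ?_, fun h => ?_⟩
  · have hsub : σ * Real.exp (-a) < 1 := hexp ▸ Real.exp_lt_one_iff.2 (by linarith)
    simpa [max_eq_left hsub.le] using hlim
  · have hsuper : 1 < σ * Real.exp (-a) := hexp ▸ Real.one_lt_exp_iff.2 (by linarith)
    exact ⟨hsuper, by simpa [max_eq_right hsuper.le] using hlim⟩

/-- Error threshold for finitely many peaks: with `σ = max_i σ_i`, in the long
chain regime `ℓ_m → ∞`, `q_m → 0`, `ℓ_m q_m → a < ∞`, the mean fitness `λ_m`
converges to `1` if `a > ln σ` and to `σ e^{-a} > 1` if `a < ln σ`. -/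
theorem error_threshold_finitely_many_peaks
    (A : Type*) [Fintype A] [DecidableEq A] (κ : ℕ)
    (hκ : Fintype.card A = κ) (hκ2 : 2 ≤ κ)
    (k : ℕ) (hk : 1 ≤ k)
    (σi : Fin k → ℝ) (hσi : ∀ i, 1 < σi i)
    (σ : ℝ) (hσub : ∀ i, σi i ≤ σ) (hσmem : ∃ i, σi i = σ)
    (a : ℝ) (ha0 : 0 ≤ a) (hane : a ≠ Real.log σ)
    (ℓ : ℕ → ℕ) (q : ℕ → ℝ)
    (hℓ : Tendsto ℓ atTop atTop)
    (hq0 : ∀ m, 0 < q m) (hq1 : ∀ m, q m < ((κ : ℝ) - 1) / κ)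
    (hq : Tendsto q atTop (𝓝 0))
    (hlq : Tendsto (fun m => (ℓ m : ℝ) * q m) atTop (𝓝 a))
    (w : ∀ m, Fin k → (Fin (ℓ m) → A))
    (hw : ∀ m, Function.Injective (w m))
    (f : ∀ m, (Fin (ℓ m) → A) → ℝ)
    (hfpeak : ∀ m i, f m (w m i) = σi i)
    (hfother : ∀ m u, (∀ i, u ≠ w m i) → f m u = 1)
    (x : ∀ m, (Fin (ℓ m) → A) → ℝ)
    (hx0 : ∀ m u, 0 ≤ x m u) (hx1 : ∀ m, ∑ u, x m u = 1)
    (hqs : ∀ m u, x m u * (∑ v, x m v * f m v) =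
      ∑ v, x m v * f m v *
        ((q m / ((κ : ℝ) - 1)) ^ hammingDist v u *
          (1 - q m) ^ (ℓ m - hammingDist v u))) :
    (Real.log σ < a →
      Tendsto (fun m => ∑ v, x m v * f m v) atTop (𝓝 1)) ∧
    (a < Real.log σ →
      1 < σ * Real.exp (-a) ∧
        Tendsto (fun m => ∑ v, x m v * f m v) atTop (𝓝 (σ * Real.exp (-a)))) :=
  error_threshold_finitely_many_peaks_general A κ hκ2 k σi hσi σ hσub hσmem a ℓ q hq0 hq hlq w f
    hfpeak hfother x hx0 hx1 hqs
end

section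
/- Fix α ∈ (0,1). For 0 ≤ b, c ≤ ℓ define M^n_H(b,c) as the probability that the sum of two independent binomial random variables with parameters (b,(1+ρⁿ)/2) and (ℓ−b,(1−ρⁿ)/2) equals c, where ρ = 1−2q. Then for every fixed n ≥ 1 and a ≥ 0, along any sequences ℓ_m → ∞, q_m → 0 with ℓ_m q_m → a, we have M^n_H(⌊αℓ_m⌋, ⌊αℓ_m⌋) → φ_{n,α}(a) = e^{−an} Σ_{k≥0} (√(4α(1−α))·an)^{2k}/(2^{2k}(k!)²). -/
open scoped BigOperators
open Filter Topology

/-- `MH ℓ ρ n b c` is the probability that the sum of two independent binomial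
random variables with parameters `(b, (1+ρⁿ)/2)` and `(ℓ-b, (1-ρⁿ)/2)`
equals `c`, written as the explicit convolution sum. -/
noncomputable def MH (ℓ : ℕ) (ρ : ℝ) (n : ℕ) (b c : ℕ) : ℝ :=
  ∑ j ∈ Finset.range (c + 1),
    (Nat.choose b j : ℝ) * ((1 + ρ ^ n) / 2) ^ j * ((1 - ρ ^ n) / 2) ^ (b - j) *
      ((Nat.choose (ℓ - b) (c - j) : ℝ) * ((1 - ρ ^ n) / 2) ^ (c - j) *
        ((1 + ρ ^ n) / 2) ^ (ℓ - b - (c - j)))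

/-!
Reflecting the summation index, `M^n_H(b, b) = ∑ᵢ B(b, P, i) B(ℓ - b, P, i)`, where
`B(N, p, i) = (N choose i) pⁱ (1 - p)^(N - i)` and `P = (1 - ρⁿ)/2`. Since `ℓ P → a n`, Poisson's
limit theorem sends the two factors to the Poisson weights of means `α a n` and `(1 - α) a n`,
whose product is the `i`-th term of `φ_{n,α}(a)`. The bound `B(N, p, i) ≤ (N p)ⁱ / i!`
dominates the terms by `Kⁱ/i! · Kⁱ/i!` for any bound `K` of `ℓ P`, so Tannery's theorem passes
the limit through the sum.
-/

open Real
open scoped Nat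

noncomputable def binomialTerm (N : ℕ) (p : ℝ) (i : ℕ) : ℝ :=
  N.choose i * p ^ i * (1 - p) ^ (N - i)

section Limits

variable {ι : Type*} {l : Filter ι} {N : ι → ℕ} {p : ι → ℝ} {L : ℝ} {α : ℝ}

theorem tendsto_zero_of_tendsto_natCast_mul (hN : Tendsto N l atTop)
    (hNp : Tendsto (fun m => (N m : ℝ) * p m) l (𝓝 L)) : Tendsto p l (𝓝 0) := by
  have hNR : Tendsto (fun m => (N m : ℝ)) l atTop := tendsto_natCast_atTop_iff.mpr hN
  refine (hNp.div_atTop hNR).congr' ?_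
  filter_upwards [hNR.eventually_gt_atTop 0] with m hm
  field_simp

theorem tendsto_choose_mul_pow (hN : Tendsto N l atTop)
    (hNp : Tendsto (fun m => (N m : ℝ) * p m) l (𝓝 L)) (i : ℕ) :
    Tendsto (fun m => ((N m).choose i : ℝ) * p m ^ i) l (𝓝 (L ^ i / i !)) := by
  have hp := tendsto_zero_of_tendsto_natCast_mul hN hNp
  have hprod : Tendsto (fun m => ∏ t ∈ Finset.range i, ((N m : ℝ) * p m - t * p m)) l
      (𝓝 (L ^ i)) := by
    simpa using tendsto_finsetProd (Finset.range i) fun t _ => hNp.sub (hp.const_mul (t : ℝ))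
  refine (hprod.div_const (i ! : ℝ)).congr' ?_
  filter_upwards [hN.eventually_ge_atTop i] with m hm
  have hdesc : ((N m).descFactorial i : ℝ) = ∏ t ∈ Finset.range i, ((N m : ℝ) - t) := by
    rw [Nat.descFactorial_eq_prod_range, Nat.cast_prod]
    exact Finset.prod_congr rfl fun t ht => Nat.cast_sub (by grind)
  rw [div_eq_iff (by positivity), mul_right_comm, ← Nat.cast_mul, mul_comm _ (i !),
    ← Nat.descFactorial_eq_factorial_mul_choose, hdesc]
  simp only [← sub_mul, Finset.prod_mul_distrib, Finset.prod_const, Finset.card_range]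

theorem tendsto_one_sub_pow (hp : Tendsto p l (𝓝 0))
    (hNp : Tendsto (fun m => (N m : ℝ) * p m) l (𝓝 L)) :
    Tendsto (fun m => (1 - p m) ^ N m) l (𝓝 (exp (-L))) := by
  have hpos : ∀ᶠ m in l, 0 < 1 - p m := by
    filter_upwards [hp.eventually (gt_mem_nhds one_pos)] with m hm
    linarith
  have hlower : Tendsto (fun m => -((N m : ℝ) * p m) / (1 - p m)) l (𝓝 (-L)) := by
    have := hNp.neg.div ((tendsto_const_nhds (x := (1 : ℝ))).sub hp) (by norm_num)
    rwa [sub_zero, div_one] at this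
  have hlog : Tendsto (fun m => (N m : ℝ) * log (1 - p m)) l (𝓝 (-L)) := by
    refine tendsto_of_tendsto_of_tendsto_of_le_of_le' hlower hNp.neg ?_ ?_
    · filter_upwards [hpos] with m hm
      rw [div_le_iff₀ hm]
      calc -((N m : ℝ) * p m) = (N m : ℝ) * (1 - p m) * (1 - (1 - p m)⁻¹) := by
            field_simp; ring
        _ ≤ (N m : ℝ) * (1 - p m) * log (1 - p m) :=
            mul_le_mul_of_nonneg_left (one_sub_inv_le_log_of_pos hm) (by positivity)
        _ = (N m : ℝ) * log (1 - p m) * (1 - p m) := by ring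
    · filter_upwards [hpos] with m hm
      have := mul_le_mul_of_nonneg_left (log_le_sub_one_of_pos hm) (N m).cast_nonneg
      linarith
  refine ((continuous_exp.tendsto _).comp hlog).congr' ?_
  filter_upwards [hpos] with m hm
  simp [exp_nat_mul, exp_log hm]

theorem tendsto_binomialTerm (hN : Tendsto N l atTop)
    (hNp : Tendsto (fun m => (N m : ℝ) * p m) l (𝓝 L)) (i : ℕ) :
    Tendsto (fun m => binomialTerm (N m) (p m) i) l (𝓝 (exp (-L) * L ^ i / i !)) := by
  have hp := tendsto_zero_of_tendsto_natCast_mul hN hNp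
  have hNip : Tendsto (fun m => ((N m - i : ℕ) : ℝ) * p m) l (𝓝 L) := by
    have := hNp.sub (hp.const_mul (i : ℝ))
    rw [mul_zero, sub_zero] at this
    refine this.congr' ?_
    filter_upwards [hN.eventually_ge_atTop i] with m hm
    rw [Nat.cast_sub hm, sub_mul]
  rw [show exp (-L) * L ^ i / i ! = L ^ i / i ! * exp (-L) by ring]
  exact (tendsto_choose_mul_pow hN hNp i).mul (tendsto_one_sub_pow hp hNip)

theorem natFloor_mul_le (hα : α ≤ 1) (y : ℕ) : ⌊α * y⌋₊ ≤ y :=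
  Nat.floor_le_of_le (mul_le_of_le_one_left y.cast_nonneg hα)

theorem tendsto_natFloor_mul_atTop (hα : 0 < α) (hN : Tendsto N l atTop) :
    Tendsto (fun m => ⌊α * N m⌋₊) l atTop :=
  tendsto_nat_floor_atTop.comp ((tendsto_natCast_atTop_iff.mpr hN).const_mul_atTop hα)

theorem tendsto_sub_natFloor_mul_atTop (hα0 : 0 ≤ α) (hα1 : α < 1) (hN : Tendsto N l atTop) :
    Tendsto (fun m => N m - ⌊α * N m⌋₊) l atTop := by
  rw [← tendsto_natCast_atTop_iff (R := ℝ)]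
  refine tendsto_atTop_mono (fun m => ?_)
    ((tendsto_natCast_atTop_iff.mpr hN).const_mul_atTop (sub_pos.mpr hα1))
  rw [Nat.cast_sub (natFloor_mul_le hα1.le _)]
  linarith [Nat.floor_le (mul_nonneg hα0 (N m).cast_nonneg)]

theorem tendsto_natFloor_mul_mul (hα : 0 ≤ α) (hp : Tendsto p l (𝓝 0))
    (h : Tendsto (fun m => (N m : ℝ) * p m) l (𝓝 L)) :
    Tendsto (fun m => (⌊α * N m⌋₊ : ℝ) * p m) l (𝓝 (α * L)) := by
  have herr : Tendsto (fun m => ((⌊α * N m⌋₊ : ℝ) - α * N m) * p m) l (𝓝 0) := by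
    refine squeeze_zero_norm (fun m => ?_) (by simpa using hp.norm)
    have h0 : 0 ≤ α * N m := mul_nonneg hα (N m).cast_nonneg
    have hfloor : |(⌊α * N m⌋₊ : ℝ) - α * N m| ≤ 1 :=
      abs_le.mpr ⟨by linarith [Nat.lt_floor_add_one (α * N m)], by linarith [Nat.floor_le h0]⟩
    rw [norm_mul, Real.norm_eq_abs]
    exact mul_le_of_le_one_left (norm_nonneg _) hfloor
  simpa using (herr.add (h.const_mul α)).congr fun m => by ring

theorem tendsto_sub_natFloor_mul_mul (hα0 : 0 ≤ α) (hα1 : α ≤ 1) (hp : Tendsto p l (𝓝 0))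
    (h : Tendsto (fun m => (N m : ℝ) * p m) l (𝓝 L)) :
    Tendsto (fun m => ((N m - ⌊α * N m⌋₊ : ℕ) : ℝ) * p m) l (𝓝 ((1 - α) * L)) := by
  refine ((h.sub (tendsto_natFloor_mul_mul hα0 hp h)).congr fun m => ?_).trans
    (by rw [sub_mul, one_mul])
  rw [Nat.cast_sub (natFloor_mul_le hα1 _), sub_mul]

theorem tendsto_mul_one_sub_one_sub_two_mul_pow_div_two {x q : ι → ℝ} {a : ℝ}
    (hq : Tendsto q l (𝓝 0)) (hxq : Tendsto (fun m => x m * q m) l (𝓝 a)) (n : ℕ) :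
    Tendsto (fun m => x m * ((1 - (1 - 2 * q m) ^ n) / 2)) l (𝓝 (a * n)) := by
  have hρ : Tendsto (fun m => 1 - 2 * q m) l (𝓝 1) := by
    simpa using (tendsto_const_nhds (x := (1 : ℝ))).sub (hq.const_mul 2)
  have hsum : Tendsto (fun m => ∑ k ∈ Finset.range n, (1 - 2 * q m) ^ k) l (𝓝 n) := by
    simpa using tendsto_finsetSum (Finset.range n) fun k _ => hρ.pow k
  refine (hxq.mul hsum).congr fun m => ?_
  linear_combination (-x m / 2) * geom_sum_mul (1 - 2 * q m) n

end Limits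

theorem binomialTerm_nonneg {p : ℝ} (hp0 : 0 ≤ p) (hp1 : p ≤ 1) (N i : ℕ) :
    0 ≤ binomialTerm N p i := by
  unfold binomialTerm
  have : 0 ≤ 1 - p := by linarith
  positivity

theorem binomialTerm_le_pow_div_factorial {p : ℝ} (hp0 : 0 ≤ p) (hp1 : p ≤ 1) (N i : ℕ) :
    binomialTerm N p i ≤ (N * p) ^ i / i ! := by
  unfold binomialTerm
  calc (N.choose i : ℝ) * p ^ i * (1 - p) ^ (N - i) ≤ (N.choose i : ℝ) * p ^ i :=
        mul_le_of_le_one_right (by positivity) (pow_le_one₀ (by linarith) (by linarith))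
    _ ≤ (N : ℝ) ^ i / i ! * p ^ i := by gcongr; exact Nat.choose_le_pow_div i N
    _ = (N * p) ^ i / i ! := by ring

theorem MH_self_eq_tsum (ℓ : ℕ) (ρ : ℝ) (n b : ℕ) :
    MH ℓ ρ n b b = ∑' i, binomialTerm b ((1 - ρ ^ n) / 2) i *
      binomialTerm (ℓ - b) ((1 - ρ ^ n) / 2) i := by
  have hvanish : ∀ i ∉ Finset.range (b + 1), binomialTerm b ((1 - ρ ^ n) / 2) i *
      binomialTerm (ℓ - b) ((1 - ρ ^ n) / 2) i = 0 := by
    intro i hi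
    simp [binomialTerm, Nat.choose_eq_zero_of_lt (by simpa [Nat.lt_succ_iff] using hi : b < i)]
  rw [tsum_eq_sum hvanish, MH, ← Finset.sum_range_reflect]
  refine Finset.sum_congr rfl fun i hi => ?_
  have hib : i ≤ b := Nat.lt_succ_iff.mp (Finset.mem_range.mp hi)
  rw [show (1 + ρ ^ n) / 2 = 1 - (1 - ρ ^ n) / 2 by ring, Nat.add_sub_cancel, Nat.sub_sub_self hib,
    Nat.choose_symm hib, binomialTerm, binomialTerm]
  ring

theorem binomialTerm_mul_binomialTerm_le {p K : ℝ} (hp0 : 0 ≤ p) (hp1 : p ≤ 1) {N M : ℕ}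
    (hN : N * p ≤ K) (hM : M * p ≤ K) (i : ℕ) :
    binomialTerm N p i * binomialTerm M p i ≤ (K ^ 2) ^ i / i ! := by
  have hK : 0 ≤ K := (by positivity : (0 : ℝ) ≤ N * p).trans hN
  calc binomialTerm N p i * binomialTerm M p i ≤ (N * p) ^ i / i ! * ((M * p) ^ i / i !) :=
        mul_le_mul (binomialTerm_le_pow_div_factorial hp0 hp1 N i)
          (binomialTerm_le_pow_div_factorial hp0 hp1 M i) (binomialTerm_nonneg hp0 hp1 M i)
          (by positivity)
    _ ≤ K ^ i / i ! * (K ^ i / i !) := by gcongr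
    _ ≤ K ^ i / i ! * K ^ i := by
        gcongr; exact div_le_self (by positivity) (mod_cast Nat.factorial_pos i)
    _ = (K ^ 2) ^ i / i ! := by ring

theorem one_sub_pow_div_two_mem_Icc {ρ : ℝ} (h0 : -1 ≤ ρ) (h1 : ρ ≤ 1) (n : ℕ) :
    (1 - ρ ^ n) / 2 ∈ Set.Icc 0 1 := by
  have := abs_le.mp ((abs_pow ρ n).trans_le (pow_le_one₀ (abs_nonneg ρ) (abs_le.mpr ⟨h0, h1⟩)))
  constructor <;> linarith

theorem exp_neg_mul_pow_div_factorial_mul_eq (α t : ℝ) (hα0 : 0 ≤ α) (hα1 : α ≤ 1) (i : ℕ) :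
    exp (-(α * t)) * (α * t) ^ i / i ! * (exp (-((1 - α) * t)) * ((1 - α) * t) ^ i / i !) =
      exp (-t) * ((√(4 * α * (1 - α)) * t) ^ (2 * i) / (2 ^ (2 * i) * (i ! : ℝ) ^ 2)) := by
  have hsq : √(4 * α * (1 - α)) ^ 2 = 4 * α * (1 - α) := Real.sq_sqrt (by nlinarith)
  have hpow : (√(4 * α * (1 - α)) * t) ^ (2 * i) = 4 ^ i * ((α * t) ^ i * ((1 - α) * t) ^ i) := by
    rw [pow_mul, mul_pow, hsq, ← mul_pow, ← mul_pow]
    ring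
  have hexp : exp (-(α * t)) * exp (-((1 - α) * t)) = exp (-t) := by rw [← exp_add]; ring_nf
  rw [hpow, pow_mul, ← hexp]
  field_simp
  ring

theorem MH_floor_tendsto_phi_alpha_general
    (α : ℝ) (hα0 : 0 < α) (hα1 : α < 1)
    (n : ℕ) (a : ℝ)
    (ℓ : ℕ → ℕ) (q : ℕ → ℝ)
    (hℓ : Tendsto ℓ atTop atTop)
    (hq0 : ∀ m, 0 < q m) (hq1 : ∀ m, q m < 1 / 2)
    (hlq : Tendsto (fun m => (ℓ m : ℝ) * q m) atTop (𝓝 a)) :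
    Tendsto
      (fun m => MH (ℓ m) (1 - 2 * q m) n (Nat.floor (α * ℓ m)) (Nat.floor (α * ℓ m)))
      atTop
      (𝓝 (Real.exp (-a * n) *
        ∑' k : ℕ, (Real.sqrt (4 * α * (1 - α)) * a * n) ^ (2 * k) /
          (2 ^ (2 * k) * ((Nat.factorial k : ℝ)) ^ 2))) := by
  set P : ℕ → ℝ := fun m => (1 - (1 - 2 * q m) ^ n) / 2
  have hℓP : Tendsto (fun m => (ℓ m : ℝ) * P m) atTop (𝓝 (a * n)) :=
    tendsto_mul_one_sub_one_sub_two_mul_pow_div_two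
      (tendsto_zero_of_tendsto_natCast_mul hℓ hlq) hlq n
  have hP := tendsto_zero_of_tendsto_natCast_mul hℓ hℓP
  have hP01 (m : ℕ) : P m ∈ Set.Icc 0 1 :=
    one_sub_pow_div_two_mem_Icc (by linarith [hq1 m]) (by linarith [hq0 m]) n
  simp only [MH_self_eq_tsum]
  rw [← tsum_mul_left]
  refine tendsto_tsum_of_dominated_convergence
    (Real.summable_pow_div_factorial ((a * n + 1) ^ 2)) (fun i => ?_) ?_
  · have := (tendsto_binomialTerm (tendsto_natFloor_mul_atTop hα0 hℓ)
      (tendsto_natFloor_mul_mul hα0.le hP hℓP) i).mul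
      (tendsto_binomialTerm (tendsto_sub_natFloor_mul_atTop hα0.le hα1 hℓ)
        (tendsto_sub_natFloor_mul_mul hα0.le hα1.le hP hℓP) i)
    rwa [exp_neg_mul_pow_div_factorial_mul_eq α _ hα0.le hα1.le, ← mul_assoc, ← neg_mul] at this
  · filter_upwards [hℓP.eventually (gt_mem_nhds (lt_add_one (a * n)))] with m hm i
    rw [Real.norm_of_nonneg (mul_nonneg (binomialTerm_nonneg (hP01 m).1 (hP01 m).2 _ i)
      (binomialTerm_nonneg (hP01 m).1 (hP01 m).2 _ i))]
    refine binomialTerm_mul_binomialTerm_le (hP01 m).1 (hP01 m).2 ?_ ?_ i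
    · exact (mul_le_mul_of_nonneg_right (mod_cast natFloor_mul_le hα1.le (ℓ m)) (hP01 m).1).trans
        hm.le
    · exact (mul_le_mul_of_nonneg_right (mod_cast Nat.sub_le _ _) (hP01 m).1).trans hm.le

/-- In the long chain regime `ℓ_m → ∞`, `q_m → 0`, `ℓ_m q_m → a`, one has
`M^n_H(⌊αℓ_m⌋, ⌊αℓ_m⌋) → φ_{n,α}(a) =
e^{-an} ∑_{k≥0} (√(4α(1-α)) an)^{2k}/(2^{2k}(k!)²)`, where `ρ_m = 1 - 2 q_m`. -/
theorem MH_floor_tendsto_phi_alpha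
    (α : ℝ) (hα0 : 0 < α) (hα1 : α < 1)
    (n : ℕ) (hn : 1 ≤ n) (a : ℝ) (ha : 0 ≤ a)
    (ℓ : ℕ → ℕ) (q : ℕ → ℝ)
    (hℓ : Tendsto ℓ atTop atTop)
    (hq0 : ∀ m, 0 < q m) (hq1 : ∀ m, q m < 1 / 2)
    (hq : Tendsto q atTop (𝓝 0))
    (hlq : Tendsto (fun m => (ℓ m : ℝ) * q m) atTop (𝓝 a)) :
    Tendsto
      (fun m => MH (ℓ m) (1 - 2 * q m) n (Nat.floor (α * ℓ m)) (Nat.floor (α * ℓ m)))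
      atTop
      (𝓝 (Real.exp (-a * n) *
        ∑' k : ℕ, (Real.sqrt (4 * α * (1 - α)) * a * n) ^ (2 * k) /
          (2 ^ (2 * k) * ((Nat.factorial k : ℝ)) ^ 2))) :=
  MH_floor_tendsto_phi_alpha_general α hα0 hα1 n a ℓ q hℓ hq0 hq1 hlq
end
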